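/- arXiv:2605.21048 — 2 statements merged into one kernel-verified Lean document; each statement's English description precedes it below -/
import Mathlib

section
/- Let (X,d,T) be a topological dynamical system (continuous L-action on a compact metric space) such that (i) every invariant measure is entropy-approximable, and (ii) the entropy map is upper semi-continuous on M(X,T). Then for every α ∈ [0, h(T)), the set M_e(X,T,α) of ergodic measures with entropy exactly α is residual in M^α(X,T) = {μ ∈ M(X,T) : h_μ(T) ≥ α}. -/
/-!
Mixing a measure of entropy exactly `α` with one of larger entropy (which exists by the
variational principle) shows that measures of entropy `> α` are dense in `M^α`. Near such a
measure `μ`, entropy-approximability gives a nonempty compact invariant `Δ` with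
`α < h(Δ) < α + ε` all of whose invariant measures are close to `μ`, and the variational
principle on `Δ` gives an ergodic `ν` on `Δ` with `α < h_ν < α + ε`. So the ergodic measures
and each set `{h < α + 1/n}` are dense in `M^α`; the first is `G_δ` and the others are open by
upper semicontinuity, hence their intersection, the ergodic measures of entropy `α`, is residual.
-/

open MeasureTheory Filter Topology Set
open scoped ENNReal NNReal

theorem ENNReal.lt_mul_add_tsub_mul {a : ℝ≥0} (ha : a < 1) {α x y : ℝ≥0∞} (hx : α ≤ x)
    (hy : α < y) : α < a * x + ((1 - a : ℝ≥0) : ℝ≥0∞) * y := by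
  have hb : ((1 - a : ℝ≥0) : ℝ≥0∞) ≠ 0 := ENNReal.coe_ne_zero.2 (tsub_pos_of_lt ha).ne'
  calc α = a * α + ((1 - a : ℝ≥0) : ℝ≥0∞) * α := by
        rw [← add_mul, ← ENNReal.coe_add, add_tsub_cancel_of_le ha.le, ENNReal.coe_one, one_mul]
    _ < a * x + ((1 - a : ℝ≥0) : ℝ≥0∞) * y :=
        ENNReal.add_lt_add_of_le_of_lt (ENNReal.mul_ne_top ENNReal.coe_ne_top hy.ne_top) (by gcongr)
          ((ENNReal.mul_lt_mul_iff_right hb ENNReal.coe_ne_top).2 hy)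

namespace MeasureTheory.ProbabilityMeasure

variable {X : Type*} [TopologicalSpace X] [MeasurableSpace X] [OpensMeasurableSpace X]

theorem tendsto_of_coe_eq_smul_add_smul {ι : Type*} {l : Filter ι} {a : ι → ℝ≥0}
    (ha : Tendsto a l (𝓝 1)) {μ ρ : ProbabilityMeasure X} {ξ : ι → ProbabilityMeasure X}
    (hξ : ∀ k, (ξ k : Measure X) = a k • (μ : Measure X) + (1 - a k) • (ρ : Measure X)) :
    Tendsto ξ l (𝓝 μ) := by
  have hξ' : toFiniteMeasure ∘ ξ =
      fun k ↦ a k • μ.toFiniteMeasure + (1 - a k) • ρ.toFiniteMeasure := by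
    funext k
    exact FiniteMeasure.toMeasure_injective (hξ k)
  have hlim : Tendsto (fun k ↦ a k • μ.toFiniteMeasure + (1 - a k) • ρ.toFiniteMeasure) l
      (𝓝 ((1 : ℝ≥0) • μ.toFiniteMeasure + (1 - 1 : ℝ≥0) • ρ.toFiniteMeasure)) :=
    (ha.smul_const _).add ((tendsto_const_nhds.sub ha).smul_const _)
  rw [tendsto_nhds_iff_toFiniteMeasure_tendsto_nhds, hξ']
  simpa using hlim

end MeasureTheory.ProbabilityMeasure

theorem exists_nonempty_mem_Ioo_of_approx {X : Type*} (P : Set X → Prop) (e : Set X → ℝ≥0∞)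
    {a b : ℝ≥0∞} (hab : a < b)
    (happrox : ∀ c, a < c → c < b → ∀ β, 0 < β → ∃ Δ, P Δ ∧ c < e Δ ∧ e Δ < c + β) :
    ∃ Δ, Δ.Nonempty ∧ P Δ ∧ e Δ ∈ Ioo a b := by
  obtain ⟨c₂, hac₂, hc₂b⟩ := exists_between hab
  obtain ⟨c₁, hac₁, hc₁₂⟩ := exists_between hac₂
  obtain ⟨c₃, hc₂₃, hc₃b⟩ := exists_between hc₂b
  obtain ⟨Δ₁, hP₁, hl₁, hu₁⟩ :=
    happrox c₁ hac₁ (hc₁₂.trans hc₂b) (c₂ - c₁) (tsub_pos_of_lt hc₁₂)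
  obtain ⟨Δ₂, hP₂, hl₂, hu₂⟩ := happrox c₂ hac₂ hc₂b (c₃ - c₂) (tsub_pos_of_lt hc₂₃)
  rw [add_tsub_cancel_of_le hc₁₂.le] at hu₁
  rw [add_tsub_cancel_of_le hc₂₃.le] at hu₂
  -- `e ∅` cannot lie in both `(c₁, c₂)` and `(c₂, c₃)`, so `Δ₁` or `Δ₂` is nonempty.
  rcases Δ₁.eq_empty_or_nonempty with rfl | hne₁
  · rcases Δ₂.eq_empty_or_nonempty with rfl | hne₂
    · exact absurd (hl₂.trans hu₁) (lt_irrefl _)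
    · exact ⟨Δ₂, hne₂, hP₂, hac₂.trans hl₂, hu₂.trans hc₃b⟩
  · exact ⟨Δ₁, hne₁, hP₁, hac₁.trans hl₁, hu₁.trans (hc₂₃.trans hc₃b)⟩

section Entropy

variable {X : Type*} [TopologicalSpace X] [MeasurableSpace X] [OpensMeasurableSpace X]

def EntropyApproximable {ι : Type*} (T : ι → X → X) (MT : Set (ProbabilityMeasure X))
    (h : ProbabilityMeasure X → ℝ≥0∞) (hTop : Set X → ℝ≥0∞) (μ : ProbabilityMeasure X) : Prop :=
  ∀ U ∈ 𝓝 μ, ∀ c : ℝ≥0∞, 0 < c → c < h μ → ∀ β : ℝ≥0∞, 0 < β →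
    ∃ Δ : Set X, IsCompact Δ ∧ (∀ i, T i '' Δ ⊆ Δ) ∧
      {ν ∈ MT | (ν : Measure X) Δ = 1} ⊆ U ∧ c < hTop Δ ∧ hTop Δ < c + β

variable {MT Erg : Set (ProbabilityMeasure X)} {h : ProbabilityMeasure X → ℝ≥0∞}

theorem setOf_entropy_gt_subset_closure_ergodic {ι : Type*} {T : ι → X → X}
    {hTop : Set X → ℝ≥0∞} (hErgMT : Erg ⊆ MT)
    (hsubvar : ∀ Δ : Set X, Δ.Nonempty → IsCompact Δ → (∀ i, T i '' Δ ⊆ Δ) →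
      hTop Δ = ⨆ μ ∈ {ν ∈ Erg | (ν : Measure X) Δ = 1}, h μ)
    (happrox : ∀ μ ∈ MT, EntropyApproximable T MT h hTop μ)
    {α ε : ℝ≥0∞} (hε : 0 < ε) :
    {μ ∈ MT | α < h μ} ⊆ closure {ν ∈ Erg | α < h ν ∧ h ν < α + ε} := by
  rintro μ ⟨hμ, hαμ⟩
  refine mem_closure_iff_nhds.2 fun U hU ↦ ?_
  obtain ⟨Δ, hne, ⟨hcpt, hinv, hU⟩, hl, hu⟩ :=
    exists_nonempty_mem_Ioo_of_approx
      (fun Δ ↦ IsCompact Δ ∧ (∀ i, T i '' Δ ⊆ Δ) ∧ {ν ∈ MT | (ν : Measure X) Δ = 1} ⊆ U) hTop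
      (lt_min hαμ (ENNReal.lt_add_right hαμ.ne_top hε.ne'))
      fun c hαc hc β hβ ↦ by
        obtain ⟨Δ, hcpt, hinv, hU, hl, hu⟩ := happrox μ hμ U hU c (zero_le.trans_lt hαc)
          (hc.trans_le (min_le_left _ _)) β hβ
        exact ⟨Δ, ⟨hcpt, hinv, hU⟩, hl, hu⟩
  rw [hsubvar Δ hne hcpt hinv] at hl hu
  obtain ⟨ν, ⟨hνErg, hνΔ⟩, hαν⟩ := lt_biSup_iff.1 hl
  have hνΔ' : ν ∈ {ν ∈ Erg | (ν : Measure X) Δ = 1} := ⟨hνErg, hνΔ⟩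
  have hνε : h ν < α + ε := ((le_biSup h hνΔ').trans_lt hu).trans_le (min_le_right _ _)
  exact ⟨ν, hU ⟨hErgMT hνErg, hνΔ⟩, hνErg, hαν, hνε⟩

theorem mem_closure_entropy_gt
    (haff : ∀ (a : ℝ≥0), a ≤ 1 → ∀ ξ μ ν : ProbabilityMeasure X, μ ∈ MT → ν ∈ MT →
      (ξ : Measure X) = a • (μ : Measure X) + (1 - a) • (ν : Measure X) →
      h ξ = (a : ℝ≥0∞) * h μ + ((1 - a : ℝ≥0) : ℝ≥0∞) * h ν)
    (hconvex : ∀ (a : ℝ≥0), a ≤ 1 → ∀ μ ν : ProbabilityMeasure X, μ ∈ MT → ν ∈ MT →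
      ∃ ξ ∈ MT, (ξ : Measure X) = a • (μ : Measure X) + (1 - a) • (ν : Measure X))
    {α : ℝ≥0∞} {ρ : ProbabilityMeasure X} (hρ : ρ ∈ MT) (hαρ : α < h ρ)
    {μ : ProbabilityMeasure X} (hμ : μ ∈ MT) (hαμ : α ≤ h μ) :
    μ ∈ closure {ξ ∈ MT | α < h ξ} := by
  have ha_lt : ∀ k : ℕ, (1 : ℝ≥0) - 1 / (k + 1) < 1 :=
    fun k ↦ tsub_lt_self one_pos (by positivity)
  have ha_tendsto : Tendsto (fun k : ℕ ↦ (1 : ℝ≥0) - 1 / (k + 1)) atTop (𝓝 1) := by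
    simpa using tendsto_const_nhds.sub (tendsto_one_div_add_atTop_nhds_zero_nat (𝕜 := ℝ≥0))
  choose ξ hξ hξμρ using fun k ↦ hconvex _ (ha_lt k).le μ ρ hμ hρ
  refine mem_closure_of_tendsto
    (ProbabilityMeasure.tendsto_of_coe_eq_smul_add_smul ha_tendsto hξμρ) (.of_forall fun k ↦ ?_)
  refine ⟨hξ k, ?_⟩
  rw [haff _ (ha_lt k).le (ξ k) μ ρ hμ hρ (hξμρ k)]
  exact ENNReal.lt_mul_add_tsub_mul (ha_lt k) hαμ hαρ

theorem setOf_entropy_ge_subset_closure_ergodic {ι : Type*} {T : ι → X → X}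
    {hTop : Set X → ℝ≥0∞} (hErgMT : Erg ⊆ MT)
    (haff : ∀ (a : ℝ≥0), a ≤ 1 → ∀ ξ μ ν : ProbabilityMeasure X, μ ∈ MT → ν ∈ MT →
      (ξ : Measure X) = a • (μ : Measure X) + (1 - a) • (ν : Measure X) →
      h ξ = (a : ℝ≥0∞) * h μ + ((1 - a : ℝ≥0) : ℝ≥0∞) * h ν)
    (hconvex : ∀ (a : ℝ≥0), a ≤ 1 → ∀ μ ν : ProbabilityMeasure X, μ ∈ MT → ν ∈ MT →
      ∃ ξ ∈ MT, (ξ : Measure X) = a • (μ : Measure X) + (1 - a) • (ν : Measure X))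
    (hsubvar : ∀ Δ : Set X, Δ.Nonempty → IsCompact Δ → (∀ i, T i '' Δ ⊆ Δ) →
      hTop Δ = ⨆ μ ∈ {ν ∈ Erg | (ν : Measure X) Δ = 1}, h μ)
    (happrox : ∀ μ ∈ MT, EntropyApproximable T MT h hTop μ)
    {α ε : ℝ≥0∞} (hε : 0 < ε) {ρ : ProbabilityMeasure X} (hρ : ρ ∈ MT) (hαρ : α < h ρ) :
    {μ ∈ MT | α ≤ h μ} ⊆ closure {ν ∈ Erg | α < h ν ∧ h ν < α + ε} := by
  rintro μ ⟨hμ, hαμ⟩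
  exact closure_minimal (setOf_entropy_gt_subset_closure_ergodic hErgMT hsubvar happrox hε)
    isClosed_closure (mem_closure_entropy_gt haff hconvex hρ hαρ hμ hαμ)

theorem dense_ergodic_entropy_lt (hErgMT : Erg ⊆ MT) {α ε : ℝ≥0∞}
    (hclosure : {μ ∈ MT | α ≤ h μ} ⊆ closure {ν ∈ Erg | α < h ν ∧ h ν < α + ε}) :
    Dense {μ : {μ // μ ∈ MT ∧ α ≤ h μ} | (μ : ProbabilityMeasure X) ∈ Erg ∧ h μ < α + ε} := by
  refine (Subtype.dense_iff (s := {μ | μ ∈ MT ∧ α ≤ h μ})).2 (hclosure.trans (closure_mono ?_))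
  rintro ν ⟨hνErg, hαν, hνε⟩
  exact ⟨⟨ν, hErgMT hνErg, hαν.le⟩, ⟨hνErg, hνε⟩, rfl⟩

end Entropy

theorem stmt7_general {X : Type*} [MetricSpace X] [MeasurableSpace X] [BorelSpace X]
    (d : ℕ) (T : (Fin d → ℕ) → X → X)
    -- the space of invariant measures and the ergodic measures
    (MT Erg : Set (ProbabilityMeasure X))
    (hErgMT : Erg ⊆ MT) (hErgGδ : IsGδ Erg)
    -- the metric entropy map, upper semi-continuous and affine
    (h : ProbabilityMeasure X → ℝ≥0∞)
    (husc : UpperSemicontinuousOn h MT)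
    (haff : ∀ (a : ℝ≥0), a ≤ 1 → ∀ ξ μ ν : ProbabilityMeasure X, μ ∈ MT → ν ∈ MT →
      (ξ : Measure X) = a • (μ : Measure X) + (1 - a) • (ν : Measure X) →
      h ξ = (a : ℝ≥0∞) * h μ + ((1 - a : ℝ≥0) : ℝ≥0∞) * h ν)
    -- invariant measures are closed under convex combinations
    (hconvex : ∀ (a : ℝ≥0), a ≤ 1 → ∀ μ ν : ProbabilityMeasure X, μ ∈ MT → ν ∈ MT →
      ∃ ξ ∈ MT, (ξ : Measure X) = a • (μ : Measure X) + (1 - a) • (ν : Measure X))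
    -- topological entropy of compact invariant subsets and the variational principle
    (hTop : Set X → ℝ≥0∞) (htop : ℝ≥0∞)
    (hvar : htop = ⨆ μ ∈ MT, h μ)
    (hsubvar : ∀ Δ : Set X, Δ.Nonempty → IsCompact Δ → (∀ i, T i '' Δ ⊆ Δ) →
      hTop Δ = ⨆ μ ∈ {ν ∈ Erg | (ν : Measure X) Δ = 1}, h μ)
    -- every invariant measure is entropy-approximable
    (happrox : ∀ μ ∈ MT, ∀ U ∈ nhds μ, ∀ c : ℝ≥0∞, 0 < c → c < h μ → ∀ β : ℝ≥0∞, 0 < β →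
      ∃ Δ : Set X, IsCompact Δ ∧ (∀ i, T i '' Δ ⊆ Δ) ∧
        {ν ∈ MT | (ν : Measure X) Δ = 1} ⊆ U ∧ c < hTop Δ ∧ hTop Δ < c + β)
    (α : ℝ≥0∞) (hα : α < htop) :
    {μ : {μ : ProbabilityMeasure X // μ ∈ MT ∧ α ≤ h μ} | (μ : ProbabilityMeasure X) ∈ Erg ∧
        h (μ : ProbabilityMeasure X) = α}
      ∈ residual {μ : ProbabilityMeasure X // μ ∈ MT ∧ α ≤ h μ} := by
  obtain ⟨ρ, hρ, hαρ⟩ : ∃ ρ ∈ MT, α < h ρ := by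
    simpa only [hvar, lt_iSup_iff, exists_prop] using hα
  set S := {μ : ProbabilityMeasure X // μ ∈ MT ∧ α ≤ h μ}
  have hdense : ∀ ε, 0 < ε → Dense {μ : S | (μ : ProbabilityMeasure X) ∈ Erg ∧ h μ < α + ε} :=
    fun ε hε ↦ dense_ergodic_entropy_lt hErgMT <|
      setOf_entropy_ge_subset_closure_ergodic hErgMT haff hconvex hsubvar happrox hε hρ hαρ
  have hErg : {μ : S | (μ : ProbabilityMeasure X) ∈ Erg} ∈ residual S :=
    residual_of_dense_Gδ (hErgGδ.preimage continuous_subtype_val)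
      ((hdense 1 one_pos).mono fun _ ↦ And.left)
  have husc' : UpperSemicontinuous fun μ : S ↦ h μ :=
    upperSemicontinuousOn_iff_restrict.2
      (husc.mono (t := {μ | μ ∈ MT ∧ α ≤ h μ}) fun _ ↦ And.left)
  have hlt : ∀ n : ℕ, {μ : S | h μ < α + (n : ℝ≥0∞)⁻¹} ∈ residual S := fun n ↦
    residual_of_dense_open (husc'.isOpen_preimage _)
      ((hdense _ (ENNReal.inv_pos.2 (ENNReal.natCast_ne_top n))).mono fun _ ↦ And.right)
  filter_upwards [hErg, countable_iInter_mem.2 hlt] with μ hμErg hμlt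
  refine ⟨hμErg, le_antisymm ?_ μ.2.2⟩
  simpa using ge_of_tendsto' (ENNReal.tendsto_inv_nat_nhds_zero.const_add α)
    fun n ↦ (mem_iInter.1 hμlt n).le

/-- If every invariant measure is entropy-approximable and the entropy map is upper
semi-continuous on `M(X,T)`, then for every `α ∈ [0,h(T))` the set of ergodic measures with
entropy exactly `α` is residual in `M^α(X,T) = {μ ∈ M(X,T) : h_μ(T) ≥ α}`. -/
theorem stmt7 {X : Type*} [MetricSpace X] [CompactSpace X] [MeasurableSpace X] [BorelSpace X]
    (d : ℕ) (hd : 0 < d)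
    (T : (Fin d → ℕ) → X → X) (hT0 : T 0 = id) (hTadd : ∀ a b, T (a + b) = T a ∘ T b)
    (hTc : ∀ i, Continuous (T i))
    -- the space of invariant measures and the ergodic measures
    (MT Erg : Set (ProbabilityMeasure X))
    (hMT : MT = {μ : ProbabilityMeasure X |
      ∀ i, MeasurePreserving (T i) (μ : Measure X) (μ : Measure X)})
    (hErgMT : Erg ⊆ MT) (hErgGδ : IsGδ Erg)
    -- the metric entropy map, upper semi-continuous and affine
    (h : ProbabilityMeasure X → ℝ≥0∞)
    (husc : UpperSemicontinuousOn h MT)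
    (haff : ∀ (a : ℝ≥0), a ≤ 1 → ∀ ξ μ ν : ProbabilityMeasure X, μ ∈ MT → ν ∈ MT →
      (ξ : Measure X) = a • (μ : Measure X) + (1 - a) • (ν : Measure X) →
      h ξ = (a : ℝ≥0∞) * h μ + ((1 - a : ℝ≥0) : ℝ≥0∞) * h ν)
    -- invariant measures are closed under convex combinations
    (hconvex : ∀ (a : ℝ≥0), a ≤ 1 → ∀ μ ν : ProbabilityMeasure X, μ ∈ MT → ν ∈ MT →
      ∃ ξ ∈ MT, (ξ : Measure X) = a • (μ : Measure X) + (1 - a) • (ν : Measure X))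
    -- topological entropy of compact invariant subsets and the variational principle
    (hTop : Set X → ℝ≥0∞) (htop : ℝ≥0∞)
    (hvar : htop = ⨆ μ ∈ MT, h μ)
    (hvarErg : htop = ⨆ μ ∈ Erg, h μ)
    (hsubvar : ∀ Δ : Set X, Δ.Nonempty → IsCompact Δ → (∀ i, T i '' Δ ⊆ Δ) →
      hTop Δ = ⨆ μ ∈ {ν ∈ Erg | (ν : Measure X) Δ = 1}, h μ)
    -- every invariant measure is entropy-approximable
    (happrox : ∀ μ ∈ MT, ∀ U ∈ nhds μ, ∀ c : ℝ≥0∞, 0 < c → c < h μ → ∀ β : ℝ≥0∞, 0 < β →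
      ∃ Δ : Set X, IsCompact Δ ∧ (∀ i, T i '' Δ ⊆ Δ) ∧
        {ν ∈ MT | (ν : Measure X) Δ = 1} ⊆ U ∧ c < hTop Δ ∧ hTop Δ < c + β)
    (α : ℝ≥0∞) (hα : α < htop) :
    {μ : {μ : ProbabilityMeasure X // μ ∈ MT ∧ α ≤ h μ} | (μ : ProbabilityMeasure X) ∈ Erg ∧
        h (μ : ProbabilityMeasure X) = α}
      ∈ residual {μ : ProbabilityMeasure X // μ ∈ MT ∧ α ≤ h μ} :=
  stmt7_general d T MT Erg hErgMT hErgGδ h husc haff hconvex hTop htop hvar hsubvar happrox α hα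
end

section
/- Let (X,d,T) be a topological dynamical system with the approximate L-product property. Suppose that for every ergodic μ₀, every h₀ ∈ (0, h_{μ₀}(T)), and all η₀, β₀, ε₀ > 0 there exist γ ∈ (0,ε₀) and a compact invariant set Δ with D(ν,μ₀) < η₀ for all ν ∈ M(Δ,T), h(Δ,T) > h₀, and h(Δ,T,γ) < h₀+β₀; and similarly for ergodic μ₀ with zero entropy one can find invariant Δ with M(Δ,T) close to μ₀. If in addition the system is entropy-dense, then every invariant measure μ ∈ M(X,T) is almost entropy-approximable. -/
open MeasureTheory
open scoped ENNReal

/-- If the conclusion of Proposition 4.1 holds (for positive-entropy ergodic measures, and the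
zero-entropy variant), and the system is entropy-dense, then every invariant measure is almost
entropy-approximable. -/
theorem stmt10 {X : Type*} [MetricSpace X] [CompactSpace X] [MeasurableSpace X] [BorelSpace X]
    (d : ℕ) (hd : 0 < d)
    (T : (Fin d → ℕ) → X → X) (hT0 : T 0 = id) (hTadd : ∀ a b, T (a + b) = T a ∘ T b)
    (hTc : ∀ i, Continuous (T i))
    (MT Erg : Set (ProbabilityMeasure X))
    (hMT : MT = {μ : ProbabilityMeasure X |
      ∀ i, MeasurePreserving (T i) (μ : Measure X) (μ : Measure X)})
    (hErgMT : Erg ⊆ MT)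
    -- metric entropy of measures, topological entropy of subsets, entropy at a scale
    (hm : ProbabilityMeasure X → ℝ≥0∞)
    (hTop : Set X → ℝ≥0∞) (hAt : Set X → ℝ → ℝ≥0∞)
    -- a metric D on measures compatible with the weak-* topology
    (D : ProbabilityMeasure X → ProbabilityMeasure X → ℝ)
    (hDsymm : ∀ μ ν, D μ ν = D ν μ)
    (hDtri : ∀ μ ν ξ, D μ ξ ≤ D μ ν + D ν ξ)
    (hDtopo : ∀ (μ : ProbabilityMeasure X) (U : Set (ProbabilityMeasure X)),
      U ∈ nhds μ ↔ ∃ ε > 0, {ν | D ν μ < ε} ⊆ U)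
    -- the approximate L-product property yields Proposition 4.1:
    (hprop41 : ∀ μ₀ ∈ Erg, ∀ c : ℝ≥0∞, 0 < c → c < hm μ₀ →
      ∀ η₀ ε₀ : ℝ, 0 < η₀ → 0 < ε₀ → ∀ β₀ : ℝ≥0∞, 0 < β₀ →
      ∃ γ : ℝ, 0 < γ ∧ γ < ε₀ ∧ ∃ Δ : Set X, IsCompact Δ ∧ (∀ i, T i '' Δ ⊆ Δ) ∧
        (∀ ν ∈ MT, (ν : Measure X) Δ = 1 → D ν μ₀ < η₀) ∧
        c < hTop Δ ∧ hAt Δ γ < c + β₀)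
    -- zero entropy variant
    (hprop48 : ∀ μ₀ ∈ Erg, hm μ₀ = 0 → ∀ η₀ : ℝ, 0 < η₀ →
      ∃ Δ : Set X, IsCompact Δ ∧ (∀ i, T i '' Δ ⊆ Δ) ∧
        (∀ ν ∈ MT, (ν : Measure X) Δ = 1 → D ν μ₀ < η₀))
    -- entropy-density
    (hdense : ∀ μ ∈ MT, ∀ η : ℝ, 0 < η → ∀ c : ℝ≥0∞, c < hm μ →
      ∃ ν ∈ Erg, D μ ν < η ∧ c < hm ν) :
    -- every invariant measure is almost entropy-approximable
    ∀ μ ∈ MT, ∀ U ∈ nhds μ, ∀ c : ℝ≥0∞, 0 < c → c < hm μ →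
      ∀ ε : ℝ, 0 < ε → ∀ β : ℝ≥0∞, 0 < β →
      ∃ (Δ : Set X) (γ : ℝ), IsCompact Δ ∧ (∀ i, T i '' Δ ⊆ Δ) ∧ 0 < γ ∧ γ < ε ∧
        {ν ∈ MT | (ν : Measure X) Δ = 1} ⊆ U ∧
        c < hTop Δ ∧ hAt Δ γ < c + β := by
  intro μ hμ U hU c hc hcμ ε hε β hβ
  obtain ⟨η, hη, hball⟩ := (hDtopo μ U).mp hU
  obtain ⟨ν, hνE, hDμν, hcν⟩ := hdense μ hμ (η / 2) (by linarith) c hcμ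
  obtain ⟨γ, hγ0, hγε, Δ, hΔc, hΔinv, hΔclose, hΔtop, hΔat⟩ :=
    hprop41 ν hνE c hc hcν (η / 2) ε (by linarith) hε β hβ
  refine ⟨Δ, γ, hΔc, hΔinv, hγ0, hγε, ?_, hΔtop, hΔat⟩
  rintro ξ ⟨hξMT, hξΔ⟩
  apply hball
  have h1 : D ξ ν < η / 2 := hΔclose ξ hξMT hξΔ
  have h2 : D ν μ < η / 2 := by rw [hDsymm]; exact hDμν
  calc D ξ μ ≤ D ξ ν + D ν μ := hDtri _ _ _
    _ < η := by linarith
end
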